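/- Let p : ℤ² → [0,∞) be the transition kernel of an aperiodic, irreducible, symmetric, finite-range random walk on ℤ². For N ≥ 2 let Λ_N = [-N,N]² ∩ ℤ² and define ψ_i = R · P_i[T_{0} < τ_{Λ_N}], where T_{0} is the hitting time of 0 and τ_{Λ_N} is the exit time of Λ_N. Then ψ₀ = R, ψ_i = 0 for i ∉ Λ_N, and there is a constant C (depending only on p) with (1/2) Σ_{i,j∈Λ_N} p(i-j)(ψ_i - ψ_j)² + Σ_{i∈Λ_N, j∉Λ_N} p(i-j) ψ_i² ≤ C R² / log N. -/

import Mathlib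

open MeasureTheory

/-- The box `Λ_N = [-N, N]² ∩ ℤ²`. -/
noncomputable def ΛN (N : ℕ) : Finset (ℤ × ℤ) :=
  Finset.Icc (-(N : ℤ)) (N : ℤ) ×ˢ Finset.Icc (-(N : ℤ)) (N : ℤ)

/-- Total weight of the kernel `p` from `i` to the complement of `Λ`:
`Σ_{j ∉ Λ} p (i - j)`. -/
noncomputable def bdryWeight (p : ℤ × ℤ → ℝ) (Λ : Finset (ℤ × ℤ)) (i : ℤ × ℤ) : ℝ :=
  ∑' j : ℤ × ℤ, if j ∈ Λ then 0 else p (i - j)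

/-- The finite-volume Hamiltonian with zero boundary condition and linear field `η`:
`H(φ) = ½ Σ_{i,j∈Λ} p(i-j) V(φ_i-φ_j) + Σ_{i∈Λ, j∉Λ} p(i-j) V(φ_i) - Σ_{i∈Λ} η_i φ_i`. -/
noncomputable def ham (p : ℤ × ℤ → ℝ) (V : ℝ → ℝ) (Λ : Finset (ℤ × ℤ))
    (η : ℤ × ℤ → ℝ) (φ : ↥Λ → ℝ) : ℝ :=
  (1 / 2) * ∑ i : ↥Λ, ∑ j : ↥Λ, p ((i : ℤ × ℤ) - (j : ℤ × ℤ)) * V (φ i - φ j)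
    + ∑ i : ↥Λ, bdryWeight p Λ (i : ℤ × ℤ) * V (φ i)
    - ∑ i : ↥Λ, η (i : ℤ × ℤ) * φ i

/-- The finite-volume quenched Gibbs measure with zero boundary condition: the probability
measure on `ℝ^Λ` with density proportional to `exp (-H(φ))`. -/
noncomputable def gibbs (p : ℤ × ℤ → ℝ) (V : ℝ → ℝ) (Λ : Finset (ℤ × ℤ))
    (η : ℤ × ℤ → ℝ) : Measure (↥Λ → ℝ) :=
  (ENNReal.ofReal (∫ φ : ↥Λ → ℝ, Real.exp (-ham p V Λ η φ)))⁻¹ •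
    volume.withDensity (fun φ => ENNReal.ofReal (Real.exp (-ham p V Λ η φ)))

/-- The origin as a point of `Λ_N`. -/
def origin (N : ℕ) : ↥(ΛN N) :=
  ⟨(0, 0), by simp [ΛN]⟩

/-- Positions of a path started at `i` with steps `s`: `pos k = i + Σ_{j<k} s j`. -/
def pathPos (i : ℤ × ℤ) {n : ℕ} (s : Fin n → ℤ × ℤ) (k : ℕ) : ℤ × ℤ :=
  i + ∑ j : Fin n, if (j : ℕ) < k then s j else 0

open Classical in
/-- `P_i[T_{0} < τ_Λ]`: the probability that the random walk with step kernel `p` started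
at `i` hits the origin before exiting `Λ`, expressed as the total weight of finite paths
staying in `Λ \ {0}` until they reach `0`. -/
noncomputable def hitProb (p : ℤ × ℤ → ℝ) (Λ : Finset (ℤ × ℤ)) (i : ℤ × ℤ) : ℝ :=
  ∑' n : ℕ, ∑' s : Fin n → ℤ × ℤ,
    if (∀ k < n, pathPos i s k ∈ Λ ∧ pathPos i s k ≠ (0, 0)) ∧ pathPos i s n = (0, 0)
    then ∏ k, p (s k) else 0

/-- `p` is the transition kernel of an aperiodic, irreducible, symmetric, finite-range
random walk on `ℤ²`. -/
structure IsNiceKernel (p : ℤ × ℤ → ℝ) : Prop where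
  nonneg : ∀ x, 0 ≤ p x
  symm : ∀ x, p (-x) = p x
  total : HasSum p 1
  finiteRange : ∃ Rg : ℕ, ∀ x : ℤ × ℤ, p x ≠ 0 → |x.1| ≤ Rg ∧ |x.2| ≤ Rg
  irreducible : ∀ x : ℤ × ℤ, ∃ n : ℕ, ∃ s : Fin n → ℤ × ℤ,
    (∀ k, p (s k) ≠ 0) ∧ ∑ k, s k = x
  aperiodic : ∃ N₀ : ℕ, ∀ n ≥ N₀, ∃ s : Fin n → ℤ × ℤ,
    (∀ k, p (s k) ≠ 0) ∧ ∑ k, s k = (0, 0)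

/-!
Away from the origin, `hitProb p Λ` is harmonic for the walk killed on leaving `Λ`, and it
equals `1` at the origin. By the Dirichlet principle it therefore minimises the energy among all
functions equal to `1` at the origin, and it suffices to exhibit one such function with energy
`O(1 / log N)`: the truncated logarithm `max 0 (1 - log (max ‖i‖ 1) / log N)`. Across a step of
length at most `K` at distance `r` from the origin its increment is `O(K² / (r log N))`, while
the sum of `1 / r²` over `Λ_N` is `1 + 8 H_N = O(log N)`.
-/

open Finset
open scoped ENNReal

section PathSums

variable (p : ℤ × ℤ → ℝ) (Λ : Finset (ℤ × ℤ))

def IsHitPath (i : ℤ × ℤ) {n : ℕ} (s : Fin n → ℤ × ℤ) : Prop :=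
  (∀ k < n, pathPos i s k ∈ Λ ∧ pathPos i s k ≠ (0, 0)) ∧ pathPos i s n = (0, 0)

open Classical in
noncomputable def hitWeight (i : ℤ × ℤ) (n : ℕ) : ℝ≥0∞ :=
  ∑' s : Fin n → ℤ × ℤ, if IsHitPath Λ i s then ∏ k, ENNReal.ofReal (p (s k)) else 0

-- The path sums are taken in `ℝ≥0∞`, where they can be reordered freely; see `hitProb_eq_toReal`.
noncomputable def hitProbENNReal (i : ℤ × ℤ) : ℝ≥0∞ :=
  ∑' n, hitWeight p Λ i n

variable {p Λ}

@[simp]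
lemma pathPos_zero (i : ℤ × ℤ) {n : ℕ} (s : Fin n → ℤ × ℤ) : pathPos i s 0 = i := by
  simp [pathPos]

lemma pathPos_cons (i a : ℤ × ℤ) {n : ℕ} (t : Fin n → ℤ × ℤ) (k : ℕ) :
    pathPos i (Fin.cons a t : Fin (n + 1) → ℤ × ℤ) (k + 1) = pathPos (i + a) t k := by
  simp [pathPos, Fin.sum_univ_succ, add_assoc]

lemma isHitPath_zero (i : ℤ × ℤ) (s : Fin 0 → ℤ × ℤ) : IsHitPath Λ i s ↔ i = (0, 0) := by
  simp [IsHitPath]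

lemma isHitPath_cons (i a : ℤ × ℤ) {n : ℕ} (t : Fin n → ℤ × ℤ) :
    IsHitPath Λ i (Fin.cons a t : Fin (n + 1) → ℤ × ℤ) ↔
      (i ∈ Λ ∧ i ≠ (0, 0)) ∧ IsHitPath Λ (i + a) t := by
  simp only [IsHitPath, Nat.forall_lt_succ_left, pathPos_zero, pathPos_cons, and_assoc]

lemma hitWeight_zero (i : ℤ × ℤ) : hitWeight p Λ i 0 = if i = (0, 0) then 1 else 0 := by
  classical
  rw [hitWeight, tsum_eq_single (fun x : Fin 0 => (0 : ℤ × ℤ)) fun s hs =>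
    (hs (funext fun k => k.elim0)).elim]
  simp only [isHitPath_zero, univ_eq_empty, prod_empty]

lemma hitWeight_succ (i : ℤ × ℤ) (n : ℕ) :
    hitWeight p Λ i (n + 1) =
      if i ∈ Λ ∧ i ≠ (0, 0) then ∑' a, ENNReal.ofReal (p a) * hitWeight p Λ (i + a) n
      else 0 := by
  classical
  have hcons (x : (ℤ × ℤ) × (Fin n → ℤ × ℤ)) :
      Fin.consEquiv (fun _ => ℤ × ℤ) x = Fin.cons x.1 x.2 := rfl
  rw [hitWeight, ← (Fin.consEquiv fun _ => ℤ × ℤ).tsum_eq, ENNReal.tsum_prod']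
  simp only [hcons, isHitPath_cons, Fin.prod_univ_succ, Fin.cons_zero, Fin.cons_succ]
  split_ifs with hi
  · refine tsum_congr fun a => ?_
    simp only [hitWeight, ne_eq, hi.1, hi.2, not_false_eq_true, true_and,
      ← ENNReal.tsum_mul_left, mul_ite, mul_zero]
  · simp [hi]

variable (hp₀ : ∀ x, 0 ≤ p x) (hp₁ : HasSum p 1)
include hp₀ hp₁

lemma tsum_ofReal_eq_one : ∑' a, ENNReal.ofReal (p a) = 1 := by
  rw [← ENNReal.ofReal_tsum_of_nonneg hp₀ hp₁.summable, hp₁.tsum_eq, ENNReal.ofReal_one]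

lemma sum_range_hitWeight_le_one (M : ℕ) (i : ℤ × ℤ) :
    ∑ n ∈ range M, hitWeight p Λ i n ≤ 1 := by
  induction M generalizing i with
  | zero => simp
  | succ M ih =>
    rw [sum_range_succ', hitWeight_zero]
    simp only [hitWeight_succ]
    by_cases hi : i ∈ Λ ∧ i ≠ (0, 0)
    · calc ∑ n ∈ range M, (if i ∈ Λ ∧ i ≠ (0, 0) then
              ∑' a, ENNReal.ofReal (p a) * hitWeight p Λ (i + a) n else 0)
            + (if i = (0, 0) then 1 else 0)
          = ∑' a, ENNReal.ofReal (p a) * ∑ n ∈ range M, hitWeight p Λ (i + a) n := by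
            simp only [if_pos hi, if_neg hi.2, add_zero, mul_sum]
            exact (Summable.tsum_finsetSum fun _ _ => ENNReal.summable).symm
        _ ≤ ∑' a, ENNReal.ofReal (p a) :=
            ENNReal.tsum_le_tsum fun a => mul_le_of_le_one_right' (ih _)
        _ = 1 := tsum_ofReal_eq_one hp₀ hp₁
    · simp only [if_neg hi, sum_const_zero, zero_add]
      split_ifs <;> simp

lemma hitProbENNReal_le_one (i : ℤ × ℤ) : hitProbENNReal p Λ i ≤ 1 := by
  rw [hitProbENNReal, ENNReal.tsum_eq_iSup_nat]
  exact iSup_le fun M => sum_range_hitWeight_le_one hp₀ hp₁ M i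

omit hp₀ hp₁ in
lemma hitProbENNReal_eq (i : ℤ × ℤ) :
    hitProbENNReal p Λ i = (if i = (0, 0) then 1 else 0)
      + if i ∈ Λ ∧ i ≠ (0, 0) then ∑' a, ENNReal.ofReal (p a) * hitProbENNReal p Λ (i + a)
        else 0 := by
  rw [hitProbENNReal, tsum_eq_zero_add' ENNReal.summable, hitWeight_zero]
  simp only [hitWeight_succ]
  congr 1
  split_ifs
  · rw [ENNReal.tsum_comm]
    simp only [hitProbENNReal, ENNReal.tsum_mul_left]
  · simp

lemma hitProb_eq_toReal (i : ℤ × ℤ) : hitProb p Λ i = (hitProbENNReal p Λ i).toReal := by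
  have hfin (n : ℕ) : hitWeight p Λ i n ≠ ⊤ :=
    ne_top_of_le_ne_top ENNReal.one_ne_top
      ((ENNReal.le_tsum n).trans (hitProbENNReal_le_one hp₀ hp₁ i))
  rw [hitProb, hitProbENNReal, ENNReal.tsum_toReal_eq hfin]
  refine tsum_congr fun n => ?_
  rw [hitWeight, ENNReal.tsum_toReal_eq fun s => by
    split_ifs
    exacts [ENNReal.prod_ne_top fun _ _ => ENNReal.ofReal_ne_top, ENNReal.zero_ne_top]]
  refine tsum_congr fun s => ?_
  unfold IsHitPath
  split_ifs
  · simp [ENNReal.toReal_prod, ENNReal.toReal_ofReal (hp₀ _)]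
  · rfl

lemma hitProb_origin : hitProb p Λ (0, 0) = 1 := by
  simp [hitProb_eq_toReal hp₀ hp₁, hitProbENNReal_eq]

lemma hitProb_of_not_mem {i : ℤ × ℤ} (hi : i ∉ Λ) (hi₀ : i ≠ (0, 0)) : hitProb p Λ i = 0 := by
  simp [hitProb_eq_toReal hp₀ hp₁, hitProbENNReal_eq, hi, hi₀]

lemma hitProb_eq_sum (hsymm : ∀ x, p (-x) = p x) (h₀ : (0, 0) ∈ Λ) {i : ℤ × ℤ} (hi : i ∈ Λ)
    (hi₀ : i ≠ (0, 0)) : hitProb p Λ i = ∑ j ∈ Λ, p (i - j) * hitProb p Λ j := by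
  have hfin (a : ℤ × ℤ) : ENNReal.ofReal (p a) * hitProbENNReal p Λ (i + a) ≠ ⊤ :=
    ENNReal.mul_ne_top ENNReal.ofReal_ne_top
      (ne_top_of_le_ne_top ENNReal.one_ne_top (hitProbENNReal_le_one hp₀ hp₁ _))
  calc hitProb p Λ i = ∑' a, p a * hitProb p Λ (i + a) := by
        rw [hitProb_eq_toReal hp₀ hp₁, hitProbENNReal_eq, if_neg hi₀, if_pos ⟨hi, hi₀⟩, zero_add,
          ENNReal.tsum_toReal_eq hfin]
        simp only [ENNReal.toReal_mul, ENNReal.toReal_ofReal (hp₀ _), hitProb_eq_toReal hp₀ hp₁]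
    _ = ∑' j, p (i - j) * hitProb p Λ j := by
        rw [← (Equiv.addLeft i).tsum_eq fun j => p (i - j) * hitProb p Λ j]
        simp [hsymm]
    _ = ∑ j ∈ Λ, p (i - j) * hitProb p Λ j :=
        tsum_eq_sum fun j hj => by
          rw [hitProb_of_not_mem hp₀ hp₁ hj fun h => hj (h ▸ h₀), mul_zero]

end PathSums

section Energy

variable (p : ℤ × ℤ → ℝ) (Λ : Finset (ℤ × ℤ))

noncomputable def energy (f : ℤ × ℤ → ℝ) : ℝ :=
  (1 / 2) * ∑ i ∈ Λ, ∑ j ∈ Λ, p (i - j) * (f i - f j) ^ 2 + ∑ i ∈ Λ, bdryWeight p Λ i * f i ^ 2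

noncomputable def dirichletLaplacian (f : ℤ × ℤ → ℝ) (i : ℤ × ℤ) : ℝ :=
  ∑ j ∈ Λ, p (i - j) * (f i - f j) + bdryWeight p Λ i * f i

variable {p Λ}

lemma hasSum_bdryWeight (hp₁ : HasSum p 1) (i : ℤ × ℤ) :
    HasSum (fun j => if j ∈ Λ then 0 else p (i - j)) (1 - ∑ j ∈ Λ, p (i - j)) := by
  classical
  have hΛ : HasSum (fun j => if j ∈ Λ then p (i - j) else 0) (∑ j ∈ Λ, p (i - j)) := by
    simpa [sum_ite_mem] using hasSum_sum_of_ne_finset_zero (s := Λ)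
      (f := fun j => if j ∈ Λ then p (i - j) else 0) fun j hj => if_neg hj
  have hall : HasSum (fun j => p (i - j)) 1 := (Equiv.subLeft i).hasSum_iff.mpr hp₁
  simpa only [sub_ite, sub_self, sub_zero] using hall.sub hΛ

lemma sum_add_bdryWeight (hp₁ : HasSum p 1) (i : ℤ × ℤ) :
    ∑ j ∈ Λ, p (i - j) + bdryWeight p Λ i = 1 := by
  rw [bdryWeight, (hasSum_bdryWeight hp₁ i).tsum_eq, add_sub_cancel]

lemma bdryWeight_nonneg (hp₀ : ∀ x, 0 ≤ p x) (i : ℤ × ℤ) : 0 ≤ bdryWeight p Λ i :=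
  tsum_nonneg fun j => by split_ifs; exacts [le_rfl, hp₀ _]

lemma energy_nonneg (hp₀ : ∀ x, 0 ≤ p x) (f : ℤ × ℤ → ℝ) : 0 ≤ energy p Λ f := by
  unfold energy
  have := bdryWeight_nonneg (Λ := Λ) hp₀
  exact add_nonneg
    (mul_nonneg (by norm_num) (sum_nonneg fun i _ => sum_nonneg fun j _ =>
      mul_nonneg (hp₀ _) (sq_nonneg _)))
    (sum_nonneg fun i _ => mul_nonneg (this i) (sq_nonneg _))

lemma energy_const_mul (f : ℤ × ℤ → ℝ) (R : ℝ) :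
    energy p Λ (fun i => R * f i) = R ^ 2 * energy p Λ f := by
  have hpair (i j : ℤ × ℤ) :
      p (i - j) * (R * f i - R * f j) ^ 2 = R ^ 2 * (p (i - j) * (f i - f j) ^ 2) := by ring
  have hsite (i : ℤ × ℤ) :
      bdryWeight p Λ i * (R * f i) ^ 2 = R ^ 2 * (bdryWeight p Λ i * f i ^ 2) := by ring
  simp only [energy, hpair, hsite, ← mul_sum]
  ring

lemma sum_sum_mul_sub_mul_sub (hsymm : ∀ x, p (-x) = p x) (f u : ℤ × ℤ → ℝ) :
    ∑ i ∈ Λ, ∑ j ∈ Λ, p (i - j) * (f i - f j) * (u i - u j) =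
      2 * ∑ i ∈ Λ, u i * ∑ j ∈ Λ, p (i - j) * (f i - f j) := by
  have hswap : ∑ i ∈ Λ, ∑ j ∈ Λ, p (i - j) * (f i - f j) * u j =
      -∑ i ∈ Λ, ∑ j ∈ Λ, p (i - j) * (f i - f j) * u i := by
    rw [sum_comm, ← sum_neg_distrib]
    refine sum_congr rfl fun i _ => ?_
    rw [← sum_neg_distrib]
    refine sum_congr rfl fun j _ => ?_
    rw [← hsymm (j - i), neg_sub]
    ring
  simp only [mul_sub _ (u _), sum_sub_distrib, hswap, mul_sum]
  rw [sub_neg_eq_add, ← two_mul, mul_sum]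
  simp only [mul_sum, mul_comm (u _), mul_assoc]

lemma energy_add (hsymm : ∀ x, p (-x) = p x) (f u : ℤ × ℤ → ℝ) :
    energy p Λ (f + u) =
      energy p Λ f + 2 * ∑ i ∈ Λ, u i * dirichletLaplacian p Λ f i + energy p Λ u := by
  have hpair (i j : ℤ × ℤ) : p (i - j) * ((f + u) i - (f + u) j) ^ 2 =
      p (i - j) * (f i - f j) ^ 2 + 2 * (p (i - j) * (f i - f j) * (u i - u j))
        + p (i - j) * (u i - u j) ^ 2 := by
    simp only [Pi.add_apply]
    ring
  have hsite (i : ℤ × ℤ) : bdryWeight p Λ i * (f + u) i ^ 2 =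
      bdryWeight p Λ i * f i ^ 2 + 2 * (u i * (bdryWeight p Λ i * f i))
        + bdryWeight p Λ i * u i ^ 2 := by
    simp only [Pi.add_apply]
    ring
  simp only [energy, dirichletLaplacian, hpair, hsite, sum_add_distrib, ← mul_sum,
    sum_sum_mul_sub_mul_sub hsymm, mul_add]
  ring

lemma energy_le_of_dirichletLaplacian_eq_zero (hp₀ : ∀ x, 0 ≤ p x)
    (hsymm : ∀ x, p (-x) = p x) {a : ℤ × ℤ} {h g : ℤ × ℤ → ℝ}
    (hh : ∀ i ∈ Λ, i ≠ a → dirichletLaplacian p Λ h i = 0) (hg : g a = h a) :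
    energy p Λ h ≤ energy p Λ g := by
  have hcross : ∑ i ∈ Λ, (g - h) i * dirichletLaplacian p Λ h i = 0 :=
    sum_eq_zero fun i hi => by
      by_cases hia : i = a
      · simp [hia, hg]
      · simp [hh i hi hia]
  have hsplit := energy_add (Λ := Λ) hsymm h (g - h)
  rw [add_sub_cancel, hcross] at hsplit
  linarith [energy_nonneg (Λ := Λ) hp₀ (g - h)]

lemma energy_le_sum_of_sq_sub_le (hp₀ : ∀ x, 0 ≤ p x) (hp₁ : HasSum p 1)
    {f : ℤ × ℤ → ℝ} (hf : ∀ j ∉ Λ, f j = 0) {B : ℤ × ℤ → ℝ}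
    (hB : ∀ i ∈ Λ, ∀ j, p (i - j) ≠ 0 → (f i - f j) ^ 2 ≤ B i) :
    energy p Λ f ≤ ∑ i ∈ Λ, B i := by
  have hpair {i : ℤ × ℤ} (hi : i ∈ Λ) (j : ℤ × ℤ) :
      p (i - j) * (f i - f j) ^ 2 ≤ p (i - j) * B i := by
    by_cases h : p (i - j) = 0
    · simp [h]
    · exact mul_le_mul_of_nonneg_left (hB i hi j h) (hp₀ _)
  -- `f` vanishes off `Λ`, so `f i ^ 2` is the squared increment along every exiting edge.
  have hsite {i : ℤ × ℤ} (hi : i ∈ Λ) : bdryWeight p Λ i * f i ^ 2 ≤ bdryWeight p Λ i * B i := by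
    have hb := hasSum_bdryWeight (Λ := Λ) hp₁ i
    rw [eq_sub_of_add_eq' (sum_add_bdryWeight hp₁ i)]
    refine hasSum_le (fun j => ?_) (hb.mul_right _) (hb.mul_right _)
    split_ifs with hj
    · simp
    · simpa [hf j hj] using hpair hi j
  have hinner : 0 ≤ ∑ i ∈ Λ, ∑ j ∈ Λ, p (i - j) * (f i - f j) ^ 2 :=
    sum_nonneg fun i _ => sum_nonneg fun j _ => mul_nonneg (hp₀ _) (sq_nonneg _)
  calc energy p Λ f
      ≤ ∑ i ∈ Λ, (∑ j ∈ Λ, p (i - j) * (f i - f j) ^ 2 + bdryWeight p Λ i * f i ^ 2) := by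
        rw [energy, sum_add_distrib]
        linarith
    _ ≤ ∑ i ∈ Λ, (∑ j ∈ Λ, p (i - j) * B i + bdryWeight p Λ i * B i) :=
        sum_le_sum fun i hi => add_le_add (sum_le_sum fun j _ => hpair hi j) (hsite hi)
    _ = ∑ i ∈ Λ, B i :=
        sum_congr rfl fun i _ => by rw [← sum_mul, ← add_mul, sum_add_bdryWeight hp₁, one_mul]

end Energy

section DirichletPrinciple

variable {p : ℤ × ℤ → ℝ} {Λ : Finset (ℤ × ℤ)} (hp₀ : ∀ x, 0 ≤ p x) (hp₁ : HasSum p 1)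
  (hsymm : ∀ x, p (-x) = p x)
include hp₀ hp₁ hsymm

lemma dirichletLaplacian_hitProb (h₀ : (0, 0) ∈ Λ) {i : ℤ × ℤ} (hi : i ∈ Λ)
    (hi₀ : i ≠ (0, 0)) : dirichletLaplacian p Λ (hitProb p Λ) i = 0 := by
  rw [dirichletLaplacian]
  simp only [mul_sub, sum_sub_distrib, ← sum_mul, ← hitProb_eq_sum hp₀ hp₁ hsymm h₀ hi hi₀]
  linear_combination hitProb p Λ i * sum_add_bdryWeight (Λ := Λ) hp₁ i

lemma energy_hitProb_le (h₀ : (0, 0) ∈ Λ) {g : ℤ × ℤ → ℝ} (hg : g (0, 0) = 1) :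
    energy p Λ (hitProb p Λ) ≤ energy p Λ g :=
  energy_le_of_dirichletLaplacian_eq_zero hp₀ hsymm
    (fun _ hi hi₀ => dirichletLaplacian_hitProb hp₀ hp₁ hsymm h₀ hi hi₀)
    (hg.trans (hitProb_origin hp₀ hp₁).symm)

end DirichletPrinciple

section LogProfile

open Real

lemma norm_eq_max_abs (i : ℤ × ℤ) : ‖i‖ = ((max |i.1| |i.2| : ℤ) : ℝ) := by
  simp [Prod.norm_def, Int.norm_eq_abs]

lemma mem_ΛN_iff {N : ℕ} {i : ℤ × ℤ} : i ∈ ΛN N ↔ max |i.1| |i.2| ≤ N := by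
  simp only [ΛN, mem_product, mem_Icc, max_le_iff, abs_le]

lemma card_ΛN (N : ℕ) : #(ΛN N) = (2 * N + 1) ^ 2 := by
  rw [ΛN, card_product, Int.card_Icc, sq]
  congr 2 <;> omega

noncomputable def radius (i : ℤ × ℤ) : ℝ := max ‖i‖ 1

noncomputable def logProfile (N : ℕ) (i : ℤ × ℤ) : ℝ :=
  max 0 (1 - log (radius i) / log N)

lemma one_le_radius (i : ℤ × ℤ) : 1 ≤ radius i := le_max_right _ _

lemma abs_radius_sub_radius_le (i j : ℤ × ℤ) : |radius i - radius j| ≤ ‖i - j‖ :=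
  (abs_max_sub_max_le_abs _ _ _).trans (abs_norm_sub_norm_le i j)

lemma sum_ΛN_inv_radius_sq (N : ℕ) : ∑ i ∈ ΛN N, (radius i ^ 2)⁻¹ = 1 + 8 * (harmonic N : ℝ) := by
  induction N with
  | zero =>
    simp [ΛN, radius]
  | succ N ih =>
    have hsub : ΛN N ⊆ ΛN (N + 1) := fun i hi => by
      rw [mem_ΛN_iff] at hi ⊢
      push_cast
      omega
    have hshell : ∀ i ∈ ΛN (N + 1) \ ΛN N, radius i = N + 1 := fun i hi => by
      rw [mem_sdiff, mem_ΛN_iff, mem_ΛN_iff] at hi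
      have : max |i.1| |i.2| = (N : ℤ) + 1 := by push_cast at hi; omega
      rw [radius, norm_eq_max_abs, this]
      push_cast
      exact max_eq_left (by linarith)
    have hcard : (#(ΛN (N + 1) \ ΛN N) : ℝ) = 8 * (N + 1) := by
      rw [card_sdiff_of_subset hsub, Nat.cast_sub (card_le_card hsub), card_ΛN, card_ΛN]
      push_cast
      ring
    rw [← sum_sdiff hsub, ih, sum_congr rfl fun i hi => by rw [hshell i hi], sum_const,
      nsmul_eq_mul, hcard, harmonic_succ]
    push_cast
    field_simp
    ring

lemma abs_log_sub_log_le {x y K : ℝ} (hx : 1 ≤ x) (hy : 1 ≤ y) (hK : 0 ≤ K)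
    (hxy : |x - y| ≤ K) : |log x - log y| ≤ K * (K + 1) / x := by
  have hlog {a b : ℝ} (ha : 0 < a) (hb : 0 < b) : log a - log b ≤ (a - b) / b := by
    rw [← log_div ha.ne' hb.ne', sub_div, div_self hb.ne']
    exact log_le_sub_one_of_pos (div_pos ha hb)
  rw [abs_le] at hxy ⊢
  constructor
  · have := hlog (by linarith : 0 < y) (by linarith : 0 < x)
    have : (y - x) / x ≤ K / x := by gcongr; linarith
    have : K / x ≤ K * (K + 1) / x := by gcongr; nlinarith
    linarith
  · have := hlog (by linarith : 0 < x) (by linarith : 0 < y)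
    -- `x ≤ y + K ≤ (K + 1) y` converts the `1 / y` of the log increment into `1 / x`.
    have : (x - y) / y ≤ K * (K + 1) / x := by
      rw [div_le_div_iff₀ (by linarith) (by linarith)]
      nlinarith [mul_nonneg (sub_nonneg.2 hxy.2) (by linarith : 0 ≤ x),
        mul_nonneg hK (by nlinarith : 0 ≤ y * (K + 1) - x)]
    linarith

lemma logProfile_origin (N : ℕ) : logProfile N (0, 0) = 1 := by
  simp [logProfile, radius]

lemma logProfile_of_not_mem {N : ℕ} (hN : 1 < N) {i : ℤ × ℤ} (hi : i ∉ ΛN N) :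
    logProfile N i = 0 := by
  have hL : 0 < log N := log_pos (by exact_mod_cast hN)
  have hNi : (N : ℝ) ≤ radius i := by
    rw [mem_ΛN_iff, not_le] at hi
    refine le_max_of_le_left ?_
    rw [norm_eq_max_abs]
    exact_mod_cast hi.le
  refine max_eq_left ?_
  rw [sub_nonpos, one_le_div hL]
  exact log_le_log (by positivity) hNi

lemma sq_logProfile_sub_le {N : ℕ} (hN : 1 < N) {K : ℝ} (hK : 0 ≤ K) {i j : ℤ × ℤ}
    (hij : ‖i - j‖ ≤ K) :
    (logProfile N i - logProfile N j) ^ 2 ≤ (K * (K + 1) / (log N * radius i)) ^ 2 := by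
  have hL : 0 < log N := log_pos (by exact_mod_cast hN)
  rw [← sq_abs]
  refine pow_le_pow_left₀ (abs_nonneg _) ?_ 2
  calc |logProfile N i - logProfile N j|
      ≤ |log (radius i) - log (radius j)| / log N := by
        rw [logProfile, logProfile, max_comm 0, max_comm 0]
        refine (abs_max_sub_max_le_abs _ _ _).trans_eq ?_
        rw [show 1 - log (radius i) / log N - (1 - log (radius j) / log N)
            = (log (radius j) - log (radius i)) / log N by ring, abs_div, abs_of_pos hL,
          abs_sub_comm]
    _ ≤ K * (K + 1) / radius i / log N := by
        gcongr
        exact abs_log_sub_log_le (one_le_radius i) (one_le_radius j) hK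
          ((abs_radius_sub_radius_le i j).trans hij)
    _ = K * (K + 1) / (log N * radius i) := by rw [div_div, mul_comm (radius i)]

lemma energy_logProfile_le {p : ℤ × ℤ → ℝ} (hp₀ : ∀ x, 0 ≤ p x) (hp₁ : HasSum p 1) {K : ℝ}
    (hK : 0 ≤ K) (hrange : ∀ x, p x ≠ 0 → ‖x‖ ≤ K) {N : ℕ} (hN : 2 ≤ N) :
    energy p (ΛN N) (logProfile N) ≤ 26 * (K * (K + 1)) ^ 2 / log N := by
  have hN₁ : 1 < N := hN
  have hL : 1 / 2 ≤ log N := by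
    have : log 2 ≤ log N := log_le_log two_pos (by exact_mod_cast hN)
    linarith [log_two_gt_d9]
  set c := K * (K + 1)
  calc energy p (ΛN N) (logProfile N)
      ≤ ∑ i ∈ ΛN N, (c / (log N * radius i)) ^ 2 :=
        energy_le_sum_of_sq_sub_le hp₀ hp₁ (fun _ => logProfile_of_not_mem hN₁)
          fun _ _ _ h => sq_logProfile_sub_le hN₁ hK (hrange _ h)
    _ = (c / log N) ^ 2 * (1 + 8 * (harmonic N : ℝ)) := by
        rw [← sum_ΛN_inv_radius_sq, mul_sum]
        refine sum_congr rfl fun i _ => ?_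
        field_simp
    _ ≤ (c / log N) ^ 2 * (9 + 8 * log N) :=
        mul_le_mul_of_nonneg_left (by linarith [harmonic_le_one_add_log N]) (sq_nonneg _)
    _ ≤ 26 * c ^ 2 / log N := by
        rw [div_pow, div_mul_eq_mul_div, div_le_div_iff₀ (by positivity) (by linarith)]
        nlinarith [sq_nonneg c, mul_nonneg (sq_nonneg c) (by linarith : (0 : ℝ) ≤ log N - 1 / 2)]

end LogProfile

/-- **Dirichlet-energy estimate for the interpolating profile.** For the profile
`ψ_i = R · P_i[T_{0} < τ_{Λ_N}]` one has `ψ₀ = R`, `ψ ≡ 0` outside `Λ_N`, and the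
Dirichlet energy is at most `C R² / log N`, with `C` depending only on `p`. -/
theorem dirichlet_energy_of_profile (p : ℤ × ℤ → ℝ) (hp : IsNiceKernel p) :
    ∃ C : ℝ, 0 < C ∧ ∀ N : ℕ, 2 ≤ N → ∀ R : ℝ,
      (R * hitProb p (ΛN N) (0, 0) = R) ∧
      (∀ i ∉ ΛN N, R * hitProb p (ΛN N) i = 0) ∧
      (1 / 2) * ∑ i ∈ ΛN N, ∑ j ∈ ΛN N,
          p (i - j) * (R * hitProb p (ΛN N) i - R * hitProb p (ΛN N) j) ^ 2
        + ∑ i ∈ ΛN N, bdryWeight p (ΛN N) i * (R * hitProb p (ΛN N) i) ^ 2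
        ≤ C * R ^ 2 / Real.log N := by
  obtain ⟨Rg, hRg⟩ := hp.finiteRange
  -- The range bound is enlarged by one so that the constant below is positive.
  set K : ℝ := Rg + 1
  have hrange (x : ℤ × ℤ) (hx : p x ≠ 0) : ‖x‖ ≤ K := by
    rw [norm_eq_max_abs]
    have hmax : ((max |x.1| |x.2| : ℤ) : ℝ) ≤ Rg := by
      exact_mod_cast max_le (hRg x hx).1 (hRg x hx).2
    linarith
  refine ⟨26 * (K * (K + 1)) ^ 2, by positivity, fun N hN R => ⟨?_, fun i hi => ?_, ?_⟩⟩
  · rw [hitProb_origin hp.nonneg hp.total, mul_one]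
  · rw [hitProb_of_not_mem hp.nonneg hp.total hi fun h => hi (h ▸ (origin N).2), mul_zero]
  · calc energy p (ΛN N) (fun i => R * hitProb p (ΛN N) i)
        = R ^ 2 * energy p (ΛN N) (hitProb p (ΛN N)) := energy_const_mul _ R
      _ ≤ R ^ 2 * energy p (ΛN N) (logProfile N) := by
        gcongr
        exact energy_hitProb_le hp.nonneg hp.total hp.symm (origin N).2 (logProfile_origin N)
      _ ≤ R ^ 2 * (26 * (K * (K + 1)) ^ 2 / Real.log N) := by
        gcongr
        exact energy_logProfile_le hp.nonneg hp.total (by positivity) hrange hN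
      _ = 26 * (K * (K + 1)) ^ 2 * R ^ 2 / Real.log N := by ring
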